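/- arXiv:2512.15351 — 2 statements merged into one kernel-verified Lean document; each statement's English description precedes it below -/
import Mathlib

section
/- Applying the operator e^{tD²} (where D = d/dt) to the monomial tⁿ yields the polynomial ∑_{k=1}^{n} (n!/k!) · C(n−1, k−1) · t^k, i.e. e^{tD²}[tⁿ] = ∑_{k=1}^{n} L(n,k) t^k where L(n,k) is the Lah number. -/
/-!
`tD²` sends `t^m` to `m(m-1) t^(m-1)`, so `(tD²)^j t^n = n^(j) (n-1)^(j) t^(n-j)` with the
falling factorials `a^(j) = a(a-1)⋯(a-j+1)`. Dividing by `j!` turns `(n-1)^(j)` into `C(n-1, j)`,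
the term `j = n` vanishes, and `k = n - j` gives `L(n, k) t^k`.
-/

open Polynomial

/-- The operator `tD²` : `p ↦ t·p''`. -/
noncomputable def tD2 (p : Polynomial ℝ) : Polynomial ℝ :=
  X * (derivative (derivative p))

/-- The operator `e^{tD²} = ∑_j (tD²)^j / j!`, a finite sum on each polynomial
since `tD²` lowers degree. -/
noncomputable def expTD2 (p : Polynomial ℝ) : Polynomial ℝ :=
  ∑ j ∈ Finset.range (p.natDegree + 1), ((j.factorial : ℝ))⁻¹ • tD2^[j] p

lemma tD2_smul (c : ℝ) (p : ℝ[X]) : tD2 (c • p) = c • tD2 p := by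
  simp only [tD2, derivative_smul, mul_smul_comm]

lemma tD2_X_pow (m : ℕ) : tD2 ((X : ℝ[X]) ^ m) = ((m * (m - 1) : ℕ) : ℝ) • X ^ (m - 1) := by
  match m with
  | 0 => simp [tD2]
  | 1 => simp [tD2]
  | m + 2 =>
    simp only [tD2, derivative_X_pow, derivative_C_mul_X_pow, smul_eq_C_mul]
    push_cast
    ring

lemma tD2_iterate_X_pow (n j : ℕ) :
    tD2^[j] ((X : ℝ[X]) ^ n) = ((n.descFactorial j * (n - 1).descFactorial j : ℕ) : ℝ) • X ^ (n - j) := by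
  induction j with
  | zero => simp
  | succ j ih =>
    rw [Function.iterate_succ_apply', ih, tD2_smul, tD2_X_pow, smul_smul, Nat.descFactorial_succ,
      Nat.descFactorial_succ, Nat.sub_right_comm n 1 j, Nat.sub_sub]
    congr 1
    push_cast
    ring

lemma expTD2_X_pow (n : ℕ) :
    expTD2 ((X : ℝ[X]) ^ n) =
      ∑ j ∈ Finset.range (n + 1), ((n.descFactorial j * (n - 1).choose j : ℕ) : ℝ) • X ^ (n - j) := by
  rw [expTD2, natDegree_X_pow]
  refine Finset.sum_congr rfl fun j _ => ?_
  rw [tD2_iterate_X_pow, smul_smul, Nat.descFactorial_eq_factorial_mul_choose (n - 1)]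
  congr 1
  push_cast
  field_simp

theorem expTD2_monomial (n : ℕ) (hn : 1 ≤ n) :
    expTD2 ((X : Polynomial ℝ) ^ n) =
      ∑ k ∈ Finset.Icc 1 n,
        (((n.factorial : ℝ) / (k.factorial : ℝ)) * ((n - 1).choose (k - 1) : ℝ)) • X ^ k := by
  have hlast : (n - 1).choose n = 0 := Nat.choose_eq_zero_of_lt (by omega)
  rw [expTD2_X_pow, Finset.sum_range_succ, hlast, mul_zero, Nat.cast_zero, zero_smul, add_zero]
  refine Finset.sum_nbij' (n - ·) (n - ·) ?_ ?_ ?_ ?_ fun j hj => ?_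
  iterate 4 (intro i hi; simp only [Finset.mem_range, Finset.mem_Icc] at hi ⊢; omega)
  rw [Finset.mem_range] at hj
  rw [Nat.sub_right_comm n j 1, Nat.choose_symm (by omega),
    Nat.descFactorial_eq_div hj.le, Nat.cast_mul,
    Nat.cast_div (Nat.factorial_dvd_factorial (Nat.sub_le n j)) (by positivity)]
end

section
/- For simple graphs G and H on disjoint vertex sets, and for each k ≥ 1, every k-path cover of the join G ∇ H arises uniquely from a pair (𝒜, ℬ) of path covers of G and H together with a k-path cover of the complete bipartite graph K_{|𝒜|,|ℬ|} (whose two sides are the paths of 𝒜 and ℬ). Consequently the path-cover polynomial satisfies π_{G∇H}(t) = ∑_{l₁,l₂} p_{l₁}(G) p_{l₂}(H) π_{K_{l₁,l₂}}(t). -/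
variable {V W : Type*}

/-- `S` is a path cover of `G`: a set of vertex-disjoint directed paths
(nonempty duplicate-free lists whose consecutive entries are adjacent in `G`,
one-vertex paths allowed) such that every vertex lies on exactly one path. -/
def IsPathCover (G : SimpleGraph V) (S : Finset (List V)) : Prop :=
  (∀ l ∈ S, l ≠ [] ∧ l.Nodup ∧ l.Chain' G.Adj) ∧ ∀ x : V, ∃! l, l ∈ S ∧ x ∈ l

/-- `p_k(G)`: the number of `k`-path covers of `G`. -/
noncomputable def pathCoverCount (G : SimpleGraph V) (k : ℕ) : ℕ :=
  Nat.card {S : Finset (List V) // S.card = k ∧ IsPathCover G S}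

/-- The number of directed Hamiltonian cycles of `G` (counted up to rotation,
with orientation distinguished): cyclic permutations `σ` of the whole vertex
set such that every vertex is adjacent to its successor. -/
noncomputable def hamCycleCount (G : SimpleGraph V) : ℕ :=
  Nat.card {σ : Equiv.Perm V // σ.IsCycle ∧ (∀ x : V, σ x ≠ x) ∧
    (∀ x : V, G.Adj x (σ x))}

/-- The number of directed Hamiltonian paths of `G`. -/
noncomputable def hamPathCount (G : SimpleGraph V) : ℕ :=
  Nat.card {l : List V // l.Nodup ∧ (∀ x : V, x ∈ l) ∧ l.Chain' G.Adj}

/-- The join `G ∇ H` of two graphs on disjoint vertex sets. -/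
def graphJoin (G : SimpleGraph V) (H : SimpleGraph W) : SimpleGraph (V ⊕ W) where
  Adj x y := match x, y with
    | Sum.inl a, Sum.inl b => G.Adj a b
    | Sum.inr a, Sum.inr b => H.Adj a b
    | Sum.inl _, Sum.inr _ => True
    | Sum.inr _, Sum.inl _ => True
  symm := ⟨by rintro (a | a) (b | b) h <;> simp_all <;> exact h.symm⟩
  loopless := ⟨by rintro (a | a) h <;> simp_all⟩


/-!
Cut every path of a path cover of `G ∇ H` into its maximal runs of vertices of `G` and of `H`.
The runs in `G` form a path cover `𝒜` of `G`, those in `H` a path cover `ℬ` of `H`, and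
contracting each run to a point turns the path into an alternating sequence of runs, that is,
a path of `K_{𝒜,ℬ}`. Conversely, since `G ∇ H` contains every edge between `V` and `W`,
concatenating the runs along the paths of any path cover of `K_{𝒜,ℬ}` gives a path cover of
`G ∇ H` whose maximal runs are exactly the paths of `𝒜` and `ℬ`. So the two constructions are
mutually inverse, and `p_k(K_{𝒜,ℬ})` depends only on `|𝒜|` and `|ℬ|`.
-/

open Finset

theorem List.Nodup.eq_of_mem_flatten {α : Type*} {L : List (List α)} {l₁ l₂ : List α} {x : α}
    (h : L.flatten.Nodup) (hl₁ : l₁ ∈ L) (hl₂ : l₂ ∈ L) (hx₁ : x ∈ l₁) (hx₂ : x ∈ l₂) :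
    l₁ = l₂ := by
  have : Std.Symm (@List.Disjoint α) := ⟨fun _ _ h => h.symm⟩
  by_contra hne
  exact (List.nodup_flatten.1 h).2.forall hl₁ hl₂ hne hx₁ hx₂

theorem isPathCover_iff {G : SimpleGraph V} {S : Finset (List V)} :
    IsPathCover G S ↔
      (∀ l ∈ S, l ≠ [] ∧ l.Nodup ∧ l.IsChain G.Adj) ∧ ∀ x, ∃! l, l ∈ S ∧ x ∈ l :=
  Iff.rfl

namespace IsPathCover

variable {V' : Type*} {G : SimpleGraph V} {G' : SimpleGraph V'} {S : Finset (List V)}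

theorem ne_nil (hS : IsPathCover G S) {l : List V} (hl : l ∈ S) : l ≠ [] := (hS.1 l hl).1

theorem nodup (hS : IsPathCover G S) {l : List V} (hl : l ∈ S) : l.Nodup := (hS.1 l hl).2.1

theorem isChain (hS : IsPathCover G S) {l : List V} (hl : l ∈ S) : l.IsChain G.Adj :=
  (hS.1 l hl).2.2

theorem eq_of_mem (hS : IsPathCover G S) {l l' : List V} {x : V} (hl : l ∈ S) (hl' : l' ∈ S)
    (hx : x ∈ l) (hx' : x ∈ l') : l = l' :=
  (hS.2 x).unique ⟨hl, hx⟩ ⟨hl', hx'⟩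

theorem card_le [Fintype V] (hS : IsPathCover G S) : S.card ≤ Fintype.card V := by
  choose path hpath using fun x => (hS.2 x).exists
  refine card_le_card_of_surjOn (s := univ) path fun l hl => ?_
  obtain ⟨x, hx⟩ := List.exists_mem_of_ne_nil l (hS.ne_nil hl)
  exact ⟨x, mem_coe.2 (mem_univ x), hS.eq_of_mem (hpath x).1 hl (hpath x).2 hx⟩

theorem preimage_map {S : Finset (List V')} (hS : IsPathCover G' S) (f : G ↪g G')
    (hf : ∀ l ∈ S, ∀ x ∈ l, x ∈ Set.range f → l ∈ Set.range (List.map f)) :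
    IsPathCover G (S.preimage (List.map f) (List.map_injective_iff.2 f.injective).injOn) := by
  refine isPathCover_iff.2 ⟨fun l hl => ?_, fun x => ?_⟩
  · rw [mem_preimage] at hl
    refine ⟨by simpa using hS.ne_nil hl, (hS.nodup hl).of_map _, ?_⟩
    simpa [List.isChain_map] using hS.isChain hl
  · obtain ⟨l', ⟨hl', hxl'⟩, -⟩ := hS.2 (f x)
    obtain ⟨l, rfl⟩ := hf l' hl' (f x) hxl' ⟨x, rfl⟩
    refine ⟨l, ⟨mem_preimage.2 hl', ?_⟩, fun m ⟨hm, hxm⟩ => ?_⟩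
    · simpa using hxl'
    · rw [mem_preimage] at hm
      exact List.map_injective_iff.2 f.injective
        (hS.eq_of_mem hm hl' (List.mem_map_of_mem hxm) hxl')

theorem biUnion_splitBy [DecidableEq V] (hS : IsPathCover G S) (r : V → V → Bool) :
    IsPathCover G (S.biUnion fun l => (l.splitBy r).toFinset) := by
  have hnodup : ∀ l ∈ S, ((l.splitBy r).flatten).Nodup := fun l hl => by
    rw [List.flatten_splitBy]; exact hS.nodup hl
  have hmem : ∀ {l b : List V} {x : V}, b ∈ l.splitBy r → x ∈ b → x ∈ l := by
    intro l b x hb hx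
    rw [← List.flatten_splitBy r l]; exact List.mem_flatten.2 ⟨_, hb, hx⟩
  simp only [isPathCover_iff, mem_biUnion, List.mem_toFinset]
  refine ⟨fun b ⟨l, hl, hb⟩ => ⟨List.ne_nil_of_mem_splitBy hb,
    (List.nodup_flatten.1 (hnodup l hl)).1 b hb, ?_⟩, fun x => ?_⟩
  · have hch := hS.isChain hl
    rw [← List.flatten_splitBy r l, List.isChain_flatten (List.nil_notMem_splitBy r l)] at hch
    exact hch.1 b hb
  · obtain ⟨l, ⟨hl, hxl⟩, -⟩ := hS.2 x
    rw [← List.flatten_splitBy r l, List.mem_flatten] at hxl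
    obtain ⟨b, hb, hxb⟩ := hxl
    refine ⟨b, ⟨⟨l, hl, hb⟩, hxb⟩, fun b' ⟨⟨l', hl', hb'⟩, hxb'⟩ => ?_⟩
    obtain rfl : l' = l := hS.eq_of_mem hl' hl (hmem hb' hxb') (hmem hb hxb)
    exact (hnodup l' hl').eq_of_mem_flatten hb' hb hxb' hxb

end IsPathCover

instance [Finite V] (G : SimpleGraph V) : Finite {S : Finset (List V) // IsPathCover G S} := by
  have := Fintype.ofFinite V
  refine Finite.of_injective (fun S => {l : {l : List V // l.Nodup} | l.1 ∈ S.1})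
    fun S T h => Subtype.ext <| Finset.ext fun l => ⟨fun hl => ?_, fun hl => ?_⟩
  · exact (Set.ext_iff.1 h ⟨l, S.2.nodup hl⟩).1 hl
  · exact (Set.ext_iff.1 h ⟨l, T.2.nodup hl⟩).2 hl

instance [Finite V] (G : SimpleGraph V) (k : ℕ) :
    Finite {S : Finset (List V) // S.card = k ∧ IsPathCover G S} :=
  Finite.of_injective (fun S => (⟨S.1, S.2.2⟩ : {S // IsPathCover G S}))
    fun _ _ h => Subtype.ext (Subtype.mk.inj h)

theorem pathCoverCount_congr {V' : Type*} {G : SimpleGraph V} {G' : SimpleGraph V'}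
    (e : G ≃g G') (k : ℕ) : pathCoverCount G k = pathCoverCount G' k := by
  classical
  refine Nat.card_congr <| e.toEquiv.listEquivOfEquiv.finsetCongr.subtypeEquiv fun S => ?_
  rw [Equiv.finsetCongr_apply, card_map]
  refine and_congr_right fun _ => ⟨fun hS => ?_, fun hS => ?_⟩
  · rw [map_eq_image, Equiv.coe_toEmbedding, Equiv.image_eq_preimage_symm_of_finset]
    exact hS.preimage_map e.symm.toEmbedding fun l _ _ _ _ =>
      List.map_surjective_iff.2 e.symm.surjective l
  · rw [← Finset.preimage_map _ S]
    exact hS.preimage_map e.toEmbedding fun l _ _ _ _ =>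
      List.map_surjective_iff.2 e.surjective l

theorem card_sigma_isPathCover [Fintype V] (G : SimpleGraph V)
    (β : {S : Finset (List V) // IsPathCover G S} → Type*) [∀ S, Finite (β S)] (n : ℕ → ℕ)
    (hβ : ∀ S, Nat.card (β S) = n S.1.card) :
    Nat.card (Σ S, β S) = ∑ l ∈ range (Fintype.card V + 1), pathCoverCount G l * n l := by
  have := Fintype.ofFinite {S : Finset (List V) // IsPathCover G S}
  rw [Nat.card_sigma, ← sum_fiberwise_of_maps_to (g := fun S => S.1.card)
    fun S _ => mem_range.2 (Nat.lt_succ_of_le S.2.card_le)]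
  refine sum_congr rfl fun l _ => ?_
  rw [sum_congr rfl fun S hS => by rw [hβ, (mem_filter.1 hS).2], sum_const, smul_eq_mul,
    ← Fintype.card_subtype, ← Nat.card_eq_fintype_card, pathCoverCount]
  congr 1
  exact Nat.card_congr <| (Equiv.subtypeSubtypeEquivSubtypeInter (IsPathCover G) (#· = l)).trans
    (Equiv.subtypeEquivRight fun _ => and_comm)

def IsIndexedPathCover {ι : Type*} (G : SimpleGraph V) (P : ι → List V) : Prop :=
  (∀ i, P i ≠ [] ∧ (P i).Nodup ∧ (P i).IsChain G.Adj) ∧ ∀ x, ∃! i, x ∈ P i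

namespace IsIndexedPathCover

variable {ι : Type*} {G : SimpleGraph V} {P : ι → List V}

theorem ne_nil (hP : IsIndexedPathCover G P) (i : ι) : P i ≠ [] := (hP.1 i).1

theorem nodup (hP : IsIndexedPathCover G P) (i : ι) : (P i).Nodup := (hP.1 i).2.1

theorem isChain (hP : IsIndexedPathCover G P) (i : ι) : (P i).IsChain G.Adj := (hP.1 i).2.2

theorem eq_of_mem (hP : IsIndexedPathCover G P) {i j : ι} {x : V} (hi : x ∈ P i)
    (hj : x ∈ P j) : i = j :=
  (hP.2 x).unique hi hj

theorem flatMap_injective (hP : IsIndexedPathCover G P) : Function.Injective (List.flatMap P) := by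
  intro t t' h
  induction t generalizing t' with
  | nil =>
    cases t' with
    | nil => rfl
    | cons j t' => exact (hP.ne_nil j (List.flatMap_eq_nil_iff.1 h.symm j List.mem_cons_self)).elim
  | cons i t ih =>
    cases t' with
    | nil => exact (hP.ne_nil i (List.flatMap_eq_nil_iff.1 h i List.mem_cons_self)).elim
    | cons j t' =>
      rw [List.flatMap_cons, List.flatMap_cons] at h
      obtain ⟨x, xs, hi⟩ := List.exists_cons_of_ne_nil (hP.ne_nil i)
      obtain ⟨y, ys, hj⟩ := List.exists_cons_of_ne_nil (hP.ne_nil j)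
      obtain rfl : x = y := by rw [hi, hj] at h; exact (List.cons.inj h).1
      obtain rfl : i = j := hP.eq_of_mem (x := x) (by simp [hi]) (by simp [hj])
      rw [ih (List.append_cancel_left h)]

theorem isPathCover_image_flatMap [DecidableEq V] (hP : IsIndexedPathCover G P)
    {Q : SimpleGraph ι} {T : Finset (List ι)}
    (hQ : ∀ i j, Q.Adj i j → ∀ x ∈ (P i).getLast?, ∀ y ∈ (P j).head?, G.Adj x y)
    (hT : IsPathCover Q T) : IsPathCover G (T.image (List.flatMap P)) := by
  refine isPathCover_iff.2 ⟨fun l hl => ?_, fun x => ?_⟩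
  · obtain ⟨t, ht, rfl⟩ := mem_image.1 hl
    refine ⟨?_, ?_, ?_⟩
    · obtain ⟨i, hi⟩ := List.exists_mem_of_ne_nil t (hT.ne_nil ht)
      exact fun h => hP.ne_nil i (List.flatMap_eq_nil_iff.1 h i hi)
    · refine List.nodup_flatMap.2 ⟨fun i _ => hP.nodup i, (hT.nodup ht).imp ?_⟩
      exact fun hij x hi hj => hij (hP.eq_of_mem hi hj)
    · have hnil : [] ∉ t.map P := fun h => by
        obtain ⟨i, -, hi⟩ := List.mem_map.1 h
        exact hP.ne_nil i hi
      rw [List.flatMap_def, List.isChain_flatten hnil, List.isChain_map]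
      refine ⟨fun l hl => ?_, (hT.isChain ht).imp fun i j => hQ i j⟩
      obtain ⟨i, -, rfl⟩ := List.mem_map.1 hl
      exact hP.isChain i
  · obtain ⟨i, hi, -⟩ := hP.2 x
    obtain ⟨t, ⟨ht, hit⟩, -⟩ := hT.2 i
    refine ⟨t.flatMap P, ⟨mem_image_of_mem _ ht, List.mem_flatMap.2 ⟨i, hit, hi⟩⟩, ?_⟩
    rintro l ⟨hl, hxl⟩
    obtain ⟨t', ht', rfl⟩ := mem_image.1 hl
    obtain ⟨j, hjt', hj⟩ := List.mem_flatMap.1 hxl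
    obtain rfl := hP.eq_of_mem hj hi
    rw [hT.eq_of_mem ht' ht hjt' hit]

theorem isPathCover_preimage_flatMap (hP : IsIndexedPathCover G P) {Q : SimpleGraph ι}
    {S : Finset (List V)} (hS : IsPathCover G S)
    (hlift : ∀ l ∈ S, ∃ t : List ι, t.IsChain Q.Adj ∧ t.flatMap P = l) :
    IsPathCover Q (S.preimage (List.flatMap P) hP.flatMap_injective.injOn) := by
  refine isPathCover_iff.2 ⟨fun t ht => ?_, fun i => ?_⟩
  · rw [mem_preimage] at ht
    obtain ⟨t', ht', heq⟩ := hlift _ ht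
    obtain rfl := hP.flatMap_injective heq
    refine ⟨?_, ?_, ht'⟩
    · rintro rfl
      exact hS.ne_nil ht rfl
    · refine (List.nodup_flatMap.1 (hS.nodup ht)).2.imp fun {i j} hdisj hij => ?_
      subst hij
      obtain ⟨x, hx⟩ := List.exists_mem_of_ne_nil _ (hP.ne_nil i)
      exact hdisj hx hx
  · obtain ⟨x, hx⟩ := List.exists_mem_of_ne_nil _ (hP.ne_nil i)
    obtain ⟨l, ⟨hl, hxl⟩, -⟩ := hS.2 x
    obtain ⟨t, -, rfl⟩ := hlift l hl
    obtain ⟨j, hjt, hxj⟩ := List.mem_flatMap.1 hxl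
    obtain rfl := hP.eq_of_mem hxj hx
    refine ⟨t, ⟨mem_preimage.2 hl, hjt⟩, fun t' ⟨ht', hjt'⟩ => hP.flatMap_injective ?_⟩
    exact hS.eq_of_mem (mem_preimage.1 ht') hl (List.mem_flatMap.2 ⟨j, hjt', hxj⟩) hxl

end IsIndexedPathCover

theorem completeBipartiteGraph_adj_iff_isLeft_ne {α β : Type*} {i j : α ⊕ β} :
    (completeBipartiteGraph α β).Adj i j ↔ i.isLeft ≠ j.isLeft := by
  cases i <;> cases j <;> simp

section Join

variable {G : SimpleGraph V} {H : SimpleGraph W}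

theorem graphJoin_adj_of_isLeft_ne {x y : V ⊕ W} (h : x.isLeft ≠ y.isLeft) :
    (graphJoin G H).Adj x y := by
  cases x <;> cases y <;> first | exact trivial | simp at h

def graphJoinInl : G ↪g graphJoin G H := ⟨.inl, Iff.rfl⟩

def graphJoinInr : H ↪g graphJoin G H := ⟨.inr, Iff.rfl⟩

def sideRuns (l : List (V ⊕ W)) : List (List (V ⊕ W)) :=
  l.splitBy fun x y => x.isLeft == y.isLeft

theorem exists_eq_map_of_mem_sideRuns {l b : List (V ⊕ W)} (hb : b ∈ sideRuns l) :
    (∃ a : List V, b = a.map Sum.inl) ∨ ∃ c : List W, b = c.map Sum.inr := by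
  have hne := List.ne_nil_of_mem_splitBy hb
  have hside : ∀ x ∈ b, x.isLeft = (b.head hne).isLeft :=
    (List.isChain_of_mem_splitBy hb).induction _ _ (fun x y hxy hx => by simp_all)
      fun _ => rfl
  cases h : (b.head hne).isLeft
  · right
    obtain ⟨c, hc⟩ : b ∈ Set.range (List.map Sum.inr) := by
      rw [Set.range_list_map, Set.range_inr]
      exact fun x hx => Sum.isLeft_eq_false.1 ((hside x hx).trans h)
    exact ⟨c, hc.symm⟩
  · left
    obtain ⟨a, ha⟩ : b ∈ Set.range (List.map Sum.inl) := by
      rw [Set.range_list_map, Set.range_inl]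
      exact fun x hx => (hside x hx).trans h
    exact ⟨a, ha.symm⟩

variable [DecidableEq V] [DecidableEq W]

def sideRunSet (S : Finset (List (V ⊕ W))) : Finset (List (V ⊕ W)) :=
  S.biUnion fun l => (sideRuns l).toFinset

noncomputable def leftRuns (S : Finset (List (V ⊕ W))) : Finset (List V) :=
  (sideRunSet S).preimage (List.map Sum.inl) (List.map_injective_iff.2 Sum.inl_injective).injOn

noncomputable def rightRuns (S : Finset (List (V ⊕ W))) : Finset (List W) :=
  (sideRunSet S).preimage (List.map Sum.inr) (List.map_injective_iff.2 Sum.inr_injective).injOn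

theorem IsPathCover.leftRuns {S : Finset (List (V ⊕ W))} (hS : IsPathCover (graphJoin G H) S) :
    IsPathCover G (leftRuns S) := by
  refine (hS.biUnion_splitBy _).preimage_map graphJoinInl fun b hb x hx ⟨v, hv⟩ => ?_
  obtain ⟨l, -, hb⟩ := mem_biUnion.1 hb
  obtain ⟨a, rfl⟩ | ⟨c, rfl⟩ := exists_eq_map_of_mem_sideRuns (List.mem_toFinset.1 hb)
  · exact ⟨a, rfl⟩
  · obtain ⟨w, -, rfl⟩ := List.mem_map.1 hx
    cases hv

theorem IsPathCover.rightRuns {S : Finset (List (V ⊕ W))} (hS : IsPathCover (graphJoin G H) S) :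
    IsPathCover H (rightRuns S) := by
  refine (hS.biUnion_splitBy _).preimage_map graphJoinInr fun b hb x hx ⟨w, hw⟩ => ?_
  obtain ⟨l, -, hb⟩ := mem_biUnion.1 hb
  obtain ⟨a, rfl⟩ | ⟨c, rfl⟩ := exists_eq_map_of_mem_sideRuns (List.mem_toFinset.1 hb)
  · obtain ⟨v, -, rfl⟩ := List.mem_map.1 hx
    cases hw
  · exact ⟨c, rfl⟩

end Join

section JoinPath

variable {G : SimpleGraph V} {H : SimpleGraph W} {A : Finset (List V)} {B : Finset (List W)}

def joinPath (A : Finset (List V)) (B : Finset (List W)) : A ⊕ B → List (V ⊕ W) :=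
  Sum.elim (fun a => a.1.map Sum.inl) (fun b => b.1.map Sum.inr)

theorem isLeft_of_mem_joinPath {i : A ⊕ B} {x : V ⊕ W} (hx : x ∈ joinPath A B i) :
    x.isLeft = i.isLeft := by
  cases i <;> obtain ⟨_, -, rfl⟩ := List.mem_map.1 hx <;> rfl

theorem graphJoin_adj_of_mem_joinPath {i j : A ⊕ B} (hij : (completeBipartiteGraph A B).Adj i j)
    {x y : V ⊕ W} (hx : x ∈ joinPath A B i) (hy : y ∈ joinPath A B j) :
    (graphJoin G H).Adj x y := by
  apply graphJoin_adj_of_isLeft_ne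
  rw [isLeft_of_mem_joinPath hx, isLeft_of_mem_joinPath hy]
  exact completeBipartiteGraph_adj_iff_isLeft_ne.1 hij

theorem isIndexedPathCover_joinPath (hA : IsPathCover G A) (hB : IsPathCover H B) :
    IsIndexedPathCover (graphJoin G H) (joinPath A B) := by
  refine ⟨fun i => ?_, fun x => ?_⟩
  · rcases i with ⟨a, ha⟩ | ⟨b, hb⟩
    · refine ⟨by simpa [joinPath] using hA.ne_nil ha, (hA.nodup ha).map Sum.inl_injective, ?_⟩
      exact List.isChain_map_of_isChain Sum.inl (fun _ _ h => h) (hA.isChain ha)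
    · refine ⟨by simpa [joinPath] using hB.ne_nil hb, (hB.nodup hb).map Sum.inr_injective, ?_⟩
      exact List.isChain_map_of_isChain Sum.inr (fun _ _ h => h) (hB.isChain hb)
  · rcases x with v | w
    · obtain ⟨a, ⟨ha, hva⟩, -⟩ := hA.2 v
      refine ⟨.inl ⟨a, ha⟩, List.mem_map_of_mem hva, fun j hj => ?_⟩
      rcases j with ⟨a', ha'⟩ | ⟨b', hb'⟩
      · simp only [joinPath, Sum.elim_inl, List.mem_map, Sum.inl.injEq, exists_eq_right] at hj
        obtain rfl := hA.eq_of_mem ha' ha hj hva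
        rfl
      · simp [joinPath] at hj
    · obtain ⟨b, ⟨hb, hwb⟩, -⟩ := hB.2 w
      refine ⟨.inr ⟨b, hb⟩, List.mem_map_of_mem hwb, fun j hj => ?_⟩
      rcases j with ⟨a', ha'⟩ | ⟨b', hb'⟩
      · simp [joinPath] at hj
      · simp only [joinPath, Sum.elim_inr, List.mem_map, Sum.inr.injEq, exists_eq_right] at hj
        obtain rfl := hB.eq_of_mem hb' hb hj hwb
        rfl

theorem sideRuns_flatMap_joinPath (hne : ∀ i, joinPath A B i ≠ []) {t : List (A ⊕ B)}
    (ht : t.IsChain (completeBipartiteGraph A B).Adj) :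
    sideRuns (t.flatMap (joinPath A B)) = t.map (joinPath A B) := by
  refine List.splitBy_flatten (fun h => ?_) (fun m hm => ?_) ?_
  · obtain ⟨i, -, hi⟩ := List.mem_map.1 h
    exact hne i hi
  · obtain ⟨i, -, rfl⟩ := List.mem_map.1 hm
    refine List.Pairwise.isChain (List.pairwise_of_forall_mem_list fun x hx y hy => ?_)
    simp [isLeft_of_mem_joinPath hx, isLeft_of_mem_joinPath hy]
  · refine List.isChain_map_of_isChain _ (fun i j hij => ⟨hne i, hne j, ?_⟩) ht
    simp [isLeft_of_mem_joinPath (List.getLast_mem _), isLeft_of_mem_joinPath (List.head_mem _),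
      completeBipartiteGraph_adj_iff_isLeft_ne.1 hij]

end JoinPath

section Bijection

variable [DecidableEq V] [DecidableEq W] {G : SimpleGraph V} {H : SimpleGraph W}
  {A : Finset (List V)} {B : Finset (List W)} {T : Finset (List (A ⊕ B))}

theorem mem_sideRunSet_image_flatMap_joinPath (hA : IsPathCover G A) (hB : IsPathCover H B)
    (hT : IsPathCover (completeBipartiteGraph A B) T) {b : List (V ⊕ W)} :
    b ∈ sideRunSet (T.image (List.flatMap (joinPath A B))) ↔ ∃ i, joinPath A B i = b := by
  have hruns {t} (ht : t ∈ T) := sideRuns_flatMap_joinPath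
    (isIndexedPathCover_joinPath hA hB).ne_nil (hT.isChain ht)
  simp only [sideRunSet, mem_biUnion, mem_image, List.mem_toFinset]
  constructor
  · rintro ⟨_, ⟨t, ht, rfl⟩, hb⟩
    rw [hruns ht] at hb
    obtain ⟨i, -, rfl⟩ := List.mem_map.1 hb
    exact ⟨i, rfl⟩
  · rintro ⟨i, rfl⟩
    obtain ⟨t, ⟨ht, hit⟩, -⟩ := hT.2 i
    exact ⟨_, ⟨t, ht, rfl⟩, by rw [hruns ht]; exact List.mem_map_of_mem hit⟩

theorem leftRuns_image_flatMap_joinPath (hA : IsPathCover G A) (hB : IsPathCover H B)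
    (hT : IsPathCover (completeBipartiteGraph A B) T) :
    leftRuns (T.image (List.flatMap (joinPath A B))) = A := by
  ext a
  rw [leftRuns, mem_preimage, mem_sideRunSet_image_flatMap_joinPath hA hB hT]
  refine ⟨fun ⟨i, hi⟩ => ?_, fun ha => ⟨.inl ⟨a, ha⟩, rfl⟩⟩
  rcases i with ⟨a', ha'⟩ | ⟨c, hc⟩
  · obtain rfl := List.map_injective_iff.2 Sum.inl_injective hi
    exact ha'
  · cases c with
    | nil => exact absurd rfl (hB.ne_nil hc)
    | cons w c => cases a <;> simp [joinPath] at hi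

theorem rightRuns_image_flatMap_joinPath (hA : IsPathCover G A) (hB : IsPathCover H B)
    (hT : IsPathCover (completeBipartiteGraph A B) T) :
    rightRuns (T.image (List.flatMap (joinPath A B))) = B := by
  ext b
  rw [rightRuns, mem_preimage, mem_sideRunSet_image_flatMap_joinPath hA hB hT]
  refine ⟨fun ⟨i, hi⟩ => ?_, fun hb => ⟨.inr ⟨b, hb⟩, rfl⟩⟩
  rcases i with ⟨a, ha⟩ | ⟨b', hb'⟩
  · cases a with
    | nil => exact absurd rfl (hA.ne_nil ha)
    | cons v a => cases b <;> simp [joinPath] at hi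
  · obtain rfl := List.map_injective_iff.2 Sum.inr_injective hi
    exact hb'

theorem exists_flatMap_joinPath_eq {S : Finset (List (V ⊕ W))} {l : List (V ⊕ W)} (hl : l ∈ S) :
    ∃ t : List (leftRuns S ⊕ rightRuns S),
      t.IsChain (completeBipartiteGraph (leftRuns S) (rightRuns S)).Adj ∧
        t.flatMap (joinPath (leftRuns S) (rightRuns S)) = l := by
  obtain ⟨t, ht⟩ : sideRuns l ∈ Set.range (List.map (joinPath (leftRuns S) (rightRuns S))) := by
    rw [Set.range_list_map]
    intro b hb
    have hbS : b ∈ sideRunSet S := mem_biUnion.2 ⟨l, hl, List.mem_toFinset.2 hb⟩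
    obtain ⟨a, rfl⟩ | ⟨c, rfl⟩ := exists_eq_map_of_mem_sideRuns hb
    · exact ⟨.inl ⟨a, mem_preimage.2 hbS⟩, rfl⟩
    · exact ⟨.inr ⟨c, mem_preimage.2 hbS⟩, rfl⟩
  refine ⟨t, ?_, by rw [List.flatMap_def, ht, sideRuns, List.flatten_splitBy]⟩
  have hch := List.isChain_getLast_head_splitBy (fun x y : V ⊕ W => x.isLeft == y.isLeft) l
  rw [← sideRuns, ← ht, List.isChain_map] at hch
  refine hch.imp fun i j ⟨hi, hj, h⟩ => completeBipartiteGraph_adj_iff_isLeft_ne.2 ?_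
  rw [← isLeft_of_mem_joinPath (List.getLast_mem hi), ← isLeft_of_mem_joinPath (List.head_mem hj)]
  simpa using h

variable (G H) in
def joinCoverOfBipartite (k : ℕ) :
    (Σ A : {A : Finset (List V) // IsPathCover G A}, Σ B : {B : Finset (List W) // IsPathCover H B},
      {T : Finset (List (A.1 ⊕ B.1)) //
        T.card = k ∧ IsPathCover (completeBipartiteGraph A.1 B.1) T}) →
      {S : Finset (List (V ⊕ W)) // S.card = k ∧ IsPathCover (graphJoin G H) S}
  | ⟨⟨A, hA⟩, ⟨B, hB⟩, ⟨T, hk, hT⟩⟩ =>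
    ⟨T.image (List.flatMap (joinPath A B)),
      by rw [card_image_of_injective _ (isIndexedPathCover_joinPath hA hB).flatMap_injective, hk],
      (isIndexedPathCover_joinPath hA hB).isPathCover_image_flatMap
        (fun _ _ hij _ hx _ hy => graphJoin_adj_of_mem_joinPath hij (List.mem_of_mem_getLast? hx)
          (List.mem_of_mem_head? hy)) hT⟩

theorem joinCoverOfBipartite_injective (k : ℕ) :
    Function.Injective (joinCoverOfBipartite G H k) := by
  rintro ⟨⟨A, hA⟩, ⟨B, hB⟩, ⟨T, hk, hT⟩⟩ ⟨⟨A', hA'⟩, ⟨B', hB'⟩, ⟨T', hk', hT'⟩⟩ h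
  have hS : T.image (List.flatMap (joinPath A B)) = T'.image (List.flatMap (joinPath A' B')) :=
    congrArg Subtype.val h
  obtain rfl : A = A' := by
    rw [← leftRuns_image_flatMap_joinPath hA hB hT, hS,
      leftRuns_image_flatMap_joinPath hA' hB' hT']
  obtain rfl : B = B' := by
    rw [← rightRuns_image_flatMap_joinPath hA hB hT, hS,
      rightRuns_image_flatMap_joinPath hA' hB' hT']
  obtain rfl : T = T' :=
    image_injective (isIndexedPathCover_joinPath hA hB).flatMap_injective hS
  rfl

theorem joinCoverOfBipartite_surjective (k : ℕ) :
    Function.Surjective (joinCoverOfBipartite G H k) := by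
  rintro ⟨S, hk, hS⟩
  have hP := isIndexedPathCover_joinPath hS.leftRuns hS.rightRuns
  have hT := hP.isPathCover_preimage_flatMap hS fun l hl => exists_flatMap_joinPath_eq hl
  have himage : (S.preimage _ hP.flatMap_injective.injOn).image
      (List.flatMap (joinPath (leftRuns S) (rightRuns S))) = S := by
    ext l
    refine ⟨fun hl => ?_, fun hl => ?_⟩
    · obtain ⟨t, ht, rfl⟩ := mem_image.1 hl
      exact mem_preimage.1 ht
    · obtain ⟨t, -, rfl⟩ := exists_flatMap_joinPath_eq hl
      exact mem_image_of_mem _ (mem_preimage.2 hl)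
  refine ⟨⟨⟨_, hS.leftRuns⟩, ⟨_, hS.rightRuns⟩, ⟨_, ?_, hT⟩⟩, Subtype.ext himage⟩
  rw [← hk, ← card_image_of_injective _ hP.flatMap_injective, himage]

end Bijection

theorem pathCoverCount_join_general {V W : Type*} [Fintype V] [Fintype W]
    (G : SimpleGraph V) (H : SimpleGraph W) (k : ℕ) :
    pathCoverCount (graphJoin G H) k =
      ∑ l₁ ∈ Finset.range (Fintype.card V + 1), ∑ l₂ ∈ Finset.range (Fintype.card W + 1),
        pathCoverCount G l₁ * pathCoverCount H l₂ *
          pathCoverCount (completeBipartiteGraph (Fin l₁) (Fin l₂)) k := by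
  classical
  have hK (A : Finset (List V)) (B : Finset (List W)) :
      Nat.card {T : Finset (List (A ⊕ B)) //
          T.card = k ∧ IsPathCover (completeBipartiteGraph A B) T} =
        pathCoverCount (completeBipartiteGraph (Fin A.card) (Fin B.card)) k :=
    pathCoverCount_congr (SimpleGraph.completeBipartiteGraphCongr A.equivFin B.equivFin) k
  rw [pathCoverCount, ← Nat.card_congr (Equiv.ofBijective _
      ⟨joinCoverOfBipartite_injective k, joinCoverOfBipartite_surjective k⟩),
    card_sigma_isPathCover G _ (fun l₁ => ∑ l₂ ∈ Finset.range (Fintype.card W + 1),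
        pathCoverCount H l₂ * pathCoverCount (completeBipartiteGraph (Fin l₁) (Fin l₂)) k) fun A =>
      card_sigma_isPathCover H _ _ fun B => hK A.1 B.1]
  simp_rw [mul_sum, mul_assoc]

/-- Path covers of the join decompose through complete bipartite graphs:
`p_k(G ∇ H) = ∑_{l₁,l₂} p_{l₁}(G) p_{l₂}(H) p_k(K_{l₁,l₂})`, i.e.
`π_{G∇H}(t) = ∑_{l₁,l₂} p_{l₁}(G) p_{l₂}(H) π_{K_{l₁,l₂}}(t)` coefficientwise. -/
theorem pathCoverCount_join {V W : Type*} [Fintype V] [Fintype W]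
    [DecidableEq V] [DecidableEq W] (G : SimpleGraph V) (H : SimpleGraph W) (k : ℕ)
    (hk : 1 ≤ k) :
    pathCoverCount (graphJoin G H) k =
      ∑ l₁ ∈ Finset.range (Fintype.card V + 1), ∑ l₂ ∈ Finset.range (Fintype.card W + 1),
        pathCoverCount G l₁ * pathCoverCount H l₂ *
          pathCoverCount (completeBipartiteGraph (Fin l₁) (Fin l₂)) k :=
  pathCoverCount_join_general G H k
end
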